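/- Let n₀ be a fixed positive integer, let q₀ = min { q_n : n > n₀ }, and let ε₀ = ε_{n₀+k} for some k ≥ 1 with q_{n₀+k} = q₀. Then σ^n(x) is constant for all n ≥ n₀ if and only if for every n > n₀ one has ε_n·(q₀ − 1) = (q_n − 1)·ε₀, i.e., ε_n = (q_n − 1)ε₀/(q₀ − 1) is a nonnegative integer for all n > n₀. -/
import Mathlib


/-- The `n`-th shift `σ^n(x) = Σ_{k=n+1}^∞ ε_k/(q_{n+1} q_{n+2} ⋯ q_k)` of the Cantor
series with bases `q` and digits `ε`; in particular `σ^0(x) = x`. -/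
noncomputable def cantorShift (q ε : ℕ → ℕ) (n : ℕ) : ℝ :=
  ∑' k : ℕ, (ε (n + k + 1) : ℝ) / ∏ i ∈ Finset.Icc (n + 1) (n + k + 1), (q i : ℝ)

open Finset

private noncomputable def cP (q : ℕ → ℕ) (n k : ℕ) : ℝ :=
  ∏ i ∈ Finset.Icc (n + 1) (n + k), (q i : ℝ)

private lemma cP_zero (q : ℕ → ℕ) (n : ℕ) : cP q n 0 = 1 := by
  simp [cP]

private lemma cP_succ (q : ℕ → ℕ) (n k : ℕ) :
    cP q n (k + 1) = cP q n k * q (n + k + 1) := by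
  unfold cP
  have : n + (k + 1) = (n + k) + 1 := rfl
  rw [this, Finset.prod_Icc_succ_top (by omega)]

private lemma cP_shift (q : ℕ → ℕ) (n k : ℕ) :
    cP q n (k + 1) = q (n + 1) * cP q (n + 1) k := by
  induction k with
  | zero => simp [cP_succ, cP_zero]
  | succ k ih =>
      rw [cP_succ, ih, cP_succ]
      have : n + 1 + k + 1 = n + (k + 1) + 1 := by omega
      rw [this]; ring

private lemma two_pow_le_cP (q : ℕ → ℕ) (hq : ∀ i, 1 ≤ i → 2 ≤ q i) (n k : ℕ) :
    (2 : ℝ) ^ k ≤ cP q n k := by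
  induction k with
  | zero => simp [cP_zero]
  | succ k ih =>
      rw [cP_succ, pow_succ]
      have h2 : (2 : ℝ) ≤ q (n + k + 1) := by
        exact_mod_cast hq (n + k + 1) (by omega)
      have hP : (0:ℝ) < (2:ℝ)^k := by positivity
      nlinarith

private lemma cP_pos (q : ℕ → ℕ) (hq : ∀ i, 1 ≤ i → 2 ≤ q i) (n k : ℕ) :
    0 < cP q n k := lt_of_lt_of_le (by positivity) (two_pow_le_cP q hq n k)

private lemma cantor_summable (q : ℕ → ℕ) (hq : ∀ i, 1 ≤ i → 2 ≤ q i) (ε : ℕ → ℕ)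
    (hε : ∀ i, 1 ≤ i → ε i ≤ q i - 1) (n : ℕ) :
    Summable (fun k : ℕ => (ε (n + k + 1) : ℝ) / cP q n (k + 1)) := by
  have hle : ∀ k : ℕ, (ε (n + k + 1) : ℝ) / cP q n (k + 1) ≤ (1/2 : ℝ) ^ k := by
    intro k
    have hPk := cP_pos q hq n k
    have hq2 : 2 ≤ q (n + k + 1) := hq _ (by omega)
    have hεq : (ε (n + k + 1) : ℝ) ≤ q (n + k + 1) := by
      have := hε (n + k + 1) (by omega)
      have : ε (n + k + 1) ≤ q (n + k + 1) := by omega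
      exact_mod_cast this
    have hpow := two_pow_le_cP q hq n k
    rw [cP_succ]
    have hqpos : (0:ℝ) < q (n + k + 1) := by positivity
    have h1 : (ε (n + k + 1) : ℝ) / (cP q n k * q (n + k + 1)) ≤ 1 / cP q n k := by
      rw [div_le_div_iff₀ (by positivity) hPk]
      calc (ε (n + k + 1) : ℝ) * cP q n k ≤ (q (n + k + 1) : ℝ) * cP q n k := by
            nlinarith
        _ = 1 * (cP q n k * q (n + k + 1)) := by ring
    refine h1.trans ?_
    rw [div_pow, one_pow, div_le_div_iff₀ hPk (by positivity)]
    nlinarith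
  exact Summable.of_nonneg_of_le (fun k => div_nonneg (Nat.cast_nonneg _) (cP_pos q hq n (k+1)).le) hle
    (summable_geometric_of_lt_one (by norm_num) (by norm_num))

private lemma cantorShift_eq_tsum (q ε : ℕ → ℕ) (n : ℕ) :
    cantorShift q ε n = ∑' k : ℕ, (ε (n + k + 1) : ℝ) / cP q n (k + 1) := rfl

set_option maxHeartbeats 1000000 in
/-- Recursion -/
private lemma cantorShift_rec (q : ℕ → ℕ) (hq : ∀ i, 1 ≤ i → 2 ≤ q i) (ε : ℕ → ℕ)
    (hε : ∀ i, 1 ≤ i → ε i ≤ q i - 1) (n : ℕ) :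
    cantorShift q ε n = ((ε (n+1) : ℝ) + cantorShift q ε (n+1)) / q (n+1) := by
  have hs := cantor_summable q hq ε hε n
  have hs' := cantor_summable q hq ε hε (n+1)
  have hq1 : (0:ℝ) < q (n+1) := by
    have := hq (n+1) (by omega); positivity
  rw [cantorShift_eq_tsum, Summable.tsum_eq_zero_add hs, cantorShift_eq_tsum]
  have hterm : ∀ k : ℕ, (ε (n + (k+1) + 1) : ℝ) / cP q n (k + 1 + 1)
      = (1 / q (n+1)) * ((ε ((n+1) + k + 1) : ℝ) / cP q (n+1) (k+1)) := by
    intro k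
    have h1 : n + (k+1) + 1 = (n+1) + k + 1 := by omega
    rw [h1, cP_shift q n (k+1)]
    have := cP_pos q hq (n+1) (k+1)
    field_simp
  simp only [hterm]
  rw [tsum_mul_left]
  have h0 : cP q n (0+1) = q (n+1) := by
    rw [cP_succ, cP_zero]; simp
  rw [h0]
  field_simp

/-- If every digit beyond `n` equals `c·(q_m − 1)`, then the shift equals `c`. -/
private lemma cantorShift_const (q : ℕ → ℕ) (hq : ∀ i, 1 ≤ i → 2 ≤ q i) (ε : ℕ → ℕ)
    (hε : ∀ i, 1 ≤ i → ε i ≤ q i - 1) (n : ℕ) (c : ℝ)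
    (hc : ∀ m, n < m → (ε m : ℝ) = c * ((q m : ℝ) - 1)) :
    cantorShift q ε n = c := by
  have hs := cantor_summable q hq ε hε n
  have hterm : ∀ k : ℕ, (ε (n + k + 1) : ℝ) / cP q n (k + 1)
      = c * (1 / cP q n k - 1 / cP q n (k + 1)) := by
    intro k
    have hPk := cP_pos q hq n k
    have hPk1 := cP_pos q hq n (k+1)
    have hq2 : 2 ≤ q (n + k + 1) := hq _ (by omega)
    have hqpos : (0:ℝ) < q (n + k + 1) := by positivity
    rw [hc (n + k + 1) (by omega)]
    rw [cP_succ] at hPk1 ⊢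
    field_simp
    try ring
  have htend : Filter.Tendsto (fun N : ℕ => ∑ k ∈ Finset.range N,
      (ε (n + k + 1) : ℝ) / cP q n (k + 1)) Filter.atTop (nhds c) := by
    have hsum : ∀ N : ℕ, ∑ k ∈ Finset.range N, (ε (n + k + 1) : ℝ) / cP q n (k + 1)
        = c * (1 - 1 / cP q n N) := by
      intro N
      simp only [hterm, ← Finset.mul_sum]
      rw [Finset.sum_range_sub' (fun k => 1 / cP q n k), cP_zero]
      norm_num
    simp only [hsum]
    have h0 : Filter.Tendsto (fun N : ℕ => 1 / cP q n N) Filter.atTop (nhds 0) := by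
      have hb : ∀ N : ℕ, 1 / cP q n N ≤ (1/2:ℝ)^N := by
        intro N
        have hpow := two_pow_le_cP q hq n N
        have hP := cP_pos q hq n N
        rw [div_pow, one_pow, div_le_div_iff₀ hP (by positivity)]
        nlinarith
      exact squeeze_zero (fun N => (one_div_nonneg.mpr (cP_pos q hq n N).le)) hb
        (tendsto_pow_atTop_nhds_zero_of_lt_one (by norm_num) (by norm_num))
    have := Filter.Tendsto.const_mul c ((tendsto_const_nhds (x := (1:ℝ))).sub h0)
    simpa using this
  rw [cantorShift_eq_tsum]
  exact ((hs.hasSum_iff_tendsto_nat).mpr htend).tsum_eq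


/-- let `n₀ ≥ 1`, let `q₀ = min {q_n : n > n₀}` and let `ε₀ = ε_{n₀+k}`
for some `k ≥ 1` attaining `q_{n₀+k} = q₀`. Then `σ^n(x)` is constant for all `n ≥ n₀`
iff `ε_n·(q₀ − 1) = (q_n − 1)·ε₀` for every `n > n₀`. -/
theorem cantor_shift_eventually_const_iff
    (q : ℕ → ℕ) (hq : ∀ k, 1 ≤ k → 2 ≤ q k)
    (ε : ℕ → ℕ) (hε : ∀ k, 1 ≤ k → ε k ≤ q k - 1)
    (n₀ : ℕ) (hn₀ : 1 ≤ n₀)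
    (q₀ : ℕ) (hq₀ : IsLeast {m : ℕ | ∃ n : ℕ, n₀ < n ∧ q n = m} q₀)
    (k : ℕ) (hk : 1 ≤ k) (hqk : q (n₀ + k) = q₀)
    (ε₀ : ℕ) (hε₀ : ε₀ = ε (n₀ + k)) :
    (∃ c : ℝ, ∀ n : ℕ, n₀ ≤ n → cantorShift q ε n = c) ↔
    (∀ n : ℕ, n₀ < n → ε n * (q₀ - 1) = (q n - 1) * ε₀) := by
  have hq₀2 : 2 ≤ q₀ := by
    obtain ⟨m, hm, hqm⟩ := hq₀.1
    exact hqm ▸ hq m (by omega)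
  constructor
  · rintro ⟨c, hc⟩ n hn
    -- from the recursion, ε m = c (q m - 1) for all m > n₀
    have key : ∀ m, n₀ < m → (ε m : ℝ) = c * ((q m : ℝ) - 1) := by
      intro m hm
      have h1 : n₀ ≤ m - 1 := by omega
      have h2 : m - 1 + 1 = m := by omega
      have hrec := cantorShift_rec q hq ε hε (m - 1)
      rw [hc (m-1) h1, h2, hc m (by omega)] at hrec
      have hqm : (0:ℝ) < q m := by
        have := hq m (by omega); positivity
      field_simp at hrec
      linarith [hrec]
    have hε₀' : (ε₀ : ℝ) = c * ((q₀ : ℝ) - 1) := by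
      rw [hε₀, key (n₀ + k) (by omega), hqk]
    have hgoal : ((ε n : ℝ)) * ((q₀ : ℝ) - 1) = ((q n : ℝ) - 1) * ε₀ := by
      rw [key n hn, hε₀']; ring
    have hqn2 : 2 ≤ q n := hq n (by omega)
    have : ((ε n * (q₀ - 1) : ℕ) : ℝ) = (((q n - 1) * ε₀ : ℕ) : ℝ) := by
      push_cast [Nat.cast_sub (by omega : 1 ≤ q₀), Nat.cast_sub (by omega : 1 ≤ q n)]
      exact_mod_cast hgoal
    exact_mod_cast this
  · intro h
    refine ⟨(ε₀ : ℝ) / ((q₀ : ℝ) - 1), fun n hn => ?_⟩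
    apply cantorShift_const q hq ε hε n
    intro m hm
    have hm₀ : n₀ < m := lt_of_le_of_lt hn hm
    have hqm2 : 2 ≤ q m := hq m (by omega)
    have hcast : ((ε m : ℝ)) * ((q₀ : ℝ) - 1) = ((q m : ℝ) - 1) * ε₀ := by
      have := h m hm₀
      have : ((ε m * (q₀ - 1) : ℕ) : ℝ) = (((q m - 1) * ε₀ : ℕ) : ℝ) := by exact_mod_cast this
      push_cast [Nat.cast_sub (by omega : 1 ≤ q₀), Nat.cast_sub (by omega : 1 ≤ q m)] at this
      linarith
    have hq₀1 : (q₀ : ℝ) - 1 ≠ 0 := by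
      have : (2:ℝ) ≤ q₀ := by exact_mod_cast hq₀2
      linarith
    field_simp
    linarith [hcast]
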